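/- Let A, Â ∈ ℝ^{m×n} with ‖Â − A‖_max ≤ Δ, let Û_r Û_rᵀ be the projection onto the top r left singular vectors of Â, let Â_r be the rank-r truncation of Â, and suppose A has rank r with left singular vector projection U U ᵀ satisfying ‖Û_r Û_rᵀ − U Uᵀ‖_op ≤ δ, and every column of A has Euclidean norm at most √m. Then every column j satisfies ‖(Â_r)_{·j} − A_{·j}‖₂² ≤ m Δ² + δ² m; in particular ‖Â_r − A‖_{2,∞} ≤ √m (Δ + δ). -/
import Mathlib


open Matrix BigOperators

noncomputable def norm2 {n : ℕ} (v : Fin n → ℝ) : ℝ := Real.sqrt (∑ i, v i ^ 2)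

noncomputable def norm1 {n : ℕ} (v : Fin n → ℝ) : ℝ := ∑ i, |v i|

noncomputable def opNorm {m n : ℕ} (A : Matrix (Fin m) (Fin n) ℝ) : ℝ :=
  sSup {c : ℝ | ∃ x : Fin n → ℝ, norm2 x = 1 ∧ c = norm2 (A.mulVec x)}

/-- The `k`-th largest singular value of `A` (1-indexed), via the Courant–Fischer
minimax characterization: the largest `c ≥ 0` such that some `k`-dimensional
subspace `W` satisfies `‖A x‖ ≥ c ‖x‖` for all `x ∈ W`. -/
noncomputable def sval {m n : ℕ} (A : Matrix (Fin m) (Fin n) ℝ) (k : ℕ) : ℝ :=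
  sSup {c : ℝ | 0 ≤ c ∧ ∃ W : Submodule ℝ (Fin n → ℝ), Module.finrank ℝ W = k ∧
    ∀ x ∈ W, c * norm2 x ≤ norm2 (A.mulVec x)}

/- ### Auxiliary lemmas -/

lemma norm2_nonneg' {n : ℕ} (v : Fin n → ℝ) : 0 ≤ norm2 v := Real.sqrt_nonneg _

lemma norm2_sq' {n : ℕ} (v : Fin n → ℝ) : norm2 v ^ 2 = ∑ i, v i ^ 2 := by
  rw [norm2, Real.sq_sqrt]; positivity

lemma norm2_smul' {n : ℕ} (c : ℝ) (v : Fin n → ℝ) :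
    norm2 (c • v) = |c| * norm2 v := by
  unfold norm2
  have h : ∑ i, (c • v) i ^ 2 = c ^ 2 * ∑ i, v i ^ 2 := by
    rw [Finset.mul_sum]
    exact Finset.sum_congr rfl fun i _ => by simp [mul_pow]
  rw [h, Real.sqrt_mul (sq_nonneg c), Real.sqrt_sq_eq_abs]

lemma norm2_eq_zero_iff' {n : ℕ} (v : Fin n → ℝ) : norm2 v = 0 ↔ v = 0 := by
  unfold norm2
  rw [Real.sqrt_eq_zero (by positivity)]
  constructor
  · intro h
    funext i
    have := (Finset.sum_eq_zero_iff_of_nonneg (fun i _ => sq_nonneg (v i))).1 h i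
      (Finset.mem_univ i)
    exact pow_eq_zero_iff (n := 2) (by norm_num) |>.1 this
  · intro h; simp [h]

/-- Any matrix's `opNorm`-defining set is bounded above by the Frobenius norm. -/
lemma opNorm_set_bddAbove {m n : ℕ} (M : Matrix (Fin m) (Fin n) ℝ) :
    BddAbove {c : ℝ | ∃ x : Fin n → ℝ, norm2 x = 1 ∧ c = norm2 (M.mulVec x)} := by
  refine ⟨Real.sqrt (∑ i, ∑ j, M i j ^ 2), ?_⟩
  rintro c ⟨x, hx, rfl⟩
  unfold norm2
  apply Real.sqrt_le_sqrt
  refine Finset.sum_le_sum fun i _ => ?_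
  calc (M.mulVec x i) ^ 2 = (∑ j, M i j * x j) ^ 2 := rfl
    _ ≤ (∑ j, M i j ^ 2) * ∑ j, x j ^ 2 :=
        Finset.sum_mul_sq_le_sq_mul_sq _ _ _
    _ = ∑ j, M i j ^ 2 := by
        have hx2 : ∑ j, x j ^ 2 = 1 := by
          have := norm2_sq' x; rw [hx] at this; simpa using this.symm
        rw [hx2, mul_one]

lemma norm2_mulVec_le {m n : ℕ} (M : Matrix (Fin m) (Fin n) ℝ) (x : Fin n → ℝ) :
    norm2 (M.mulVec x) ≤ opNorm M * norm2 x := by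
  rcases eq_or_ne (norm2 x) 0 with h0 | h0
  · have hx : x = 0 := (norm2_eq_zero_iff' x).1 h0
    have hz1 : norm2 (0 : Fin m → ℝ) = 0 := by simp [norm2]
    have hz2 : norm2 (0 : Fin n → ℝ) = 0 := by simp [norm2]
    simp only [hx, Matrix.mulVec_zero, hz1, hz2, mul_zero, le_refl]
  · have hpos : 0 < norm2 x := lt_of_le_of_ne (norm2_nonneg' x) (Ne.symm h0)
    set u : Fin n → ℝ := (norm2 x)⁻¹ • x with hu
    have hu1 : norm2 u = 1 := by
      rw [hu, norm2_smul', abs_of_pos (inv_pos.2 hpos), inv_mul_cancel₀ h0]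
    have hle : norm2 (M.mulVec u) ≤ opNorm M :=
      le_csSup (opNorm_set_bddAbove M) ⟨u, hu1, rfl⟩
    have hxu : x = norm2 x • u := by
      rw [hu, smul_smul, mul_inv_cancel₀ h0, one_smul]
    calc norm2 (M.mulVec x) = norm2 (M.mulVec (norm2 x • u)) := by rw [← hxu]
      _ = norm2 (norm2 x • M.mulVec u) := by rw [mulVec_smul]
      _ = norm2 x * norm2 (M.mulVec u) := by rw [norm2_smul', abs_of_pos hpos]
      _ ≤ norm2 x * opNorm M := mul_le_mul_of_nonneg_left hle (le_of_lt hpos)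
      _ = opNorm M * norm2 x := mul_comm _ _

lemma pythagoras' {m : ℕ} (a b : Fin m → ℝ) (h : ∑ i, a i * b i = 0) :
    ∑ i, (a i + b i) ^ 2 = ∑ i, a i ^ 2 + ∑ i, b i ^ 2 := by
  have he : ∀ i, (a i + b i) ^ 2 = a i ^ 2 + b i ^ 2 + 2 * (a i * b i) := by
    intro i; ring
  rw [Finset.sum_congr rfl fun i _ => he i, Finset.sum_add_distrib,
    Finset.sum_add_distrib, ← Finset.mul_sum, h]
  ring

/-- For a symmetric idempotent `P`, `P x` is orthogonal to `(P - 1) y`. -/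
lemma proj_orth {m : ℕ} (P : Matrix (Fin m) (Fin m) ℝ)
    (hPsym : Pᵀ = P) (hPP : P * P = P) (x y : Fin m → ℝ) :
    ∑ i, P.mulVec x i * (P - 1).mulVec y i = 0 := by
  have h : ∑ i, P.mulVec x i * (P - 1).mulVec y i
      = (P.mulVec x) ⬝ᵥ ((P - 1).mulVec y) := rfl
  rw [h, dotProduct_mulVec, vecMul_mulVec]
  have : Pᵀ * (P - 1) = 0 := by
    rw [hPsym, Matrix.mul_sub, hPP, Matrix.mul_one, sub_self]
  rw [this]
  simp

/-- column-wise error of the rank-r truncation Â_r = Û_r Û_rᵀ Â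
against a rank-r matrix A with left singular projection U Uᵀ:
‖(Â_r)_{·j} − A_{·j}‖₂² ≤ mΔ² + δ²m, hence ‖Â_r − A‖_{2,∞} ≤ √m (Δ + δ). -/
theorem truncation_column_error {m n r : ℕ}
    (A Ah : Matrix (Fin m) (Fin n) ℝ)
    (Δ δ : ℝ) (hΔ0 : 0 ≤ Δ) (hδ0 : 0 ≤ δ)
    (hmax : ∀ i j, |Ah i j - A i j| ≤ Δ)
    (Uhr : Matrix (Fin m) (Fin r) ℝ) (hUhr : Uhrᵀ * Uhr = 1)
    (Ahr : Matrix (Fin m) (Fin n) ℝ) (hAhr : Ahr = Uhr * Uhrᵀ * Ah)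
    (U : Matrix (Fin m) (Fin r) ℝ) (hUo : Uᵀ * U = 1)
    (hArank : A.rank = r) (hAspan : U * Uᵀ * A = A)
    (hproj : opNorm (Uhr * Uhrᵀ - U * Uᵀ) ≤ δ)
    (hcol : ∀ j, norm2 (fun i => A i j) ≤ Real.sqrt m) :
    (∀ j, norm2 (fun i => Ahr i j - A i j) ^ 2 ≤ m * Δ ^ 2 + δ ^ 2 * m) ∧
      (∀ j, norm2 (fun i => Ahr i j - A i j) ≤ Real.sqrt m * (Δ + δ)) := by
  set P : Matrix (Fin m) (Fin m) ℝ := Uhr * Uhrᵀ with hP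
  set Q : Matrix (Fin m) (Fin m) ℝ := U * Uᵀ with hQ
  have hPP : P * P = P := by
    rw [hP]
    calc Uhr * Uhrᵀ * (Uhr * Uhrᵀ) = Uhr * (Uhrᵀ * Uhr) * Uhrᵀ := by
          simp only [Matrix.mul_assoc]
      _ = Uhr * Uhrᵀ := by rw [hUhr, Matrix.mul_one]
  have hPsym : Pᵀ = P := by rw [hP, Matrix.transpose_mul, Matrix.transpose_transpose]
  have main : ∀ j, norm2 (fun i => Ahr i j - A i j) ^ 2 ≤ m * Δ ^ 2 + δ ^ 2 * m := by
    intro j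
    set v : Fin m → ℝ := fun i => Ah i j - A i j with hv
    set w : Fin m → ℝ := fun i => A i j with hw
    have hQw : Q.mulVec w = w := by
      funext i
      have := congrFun (congrFun hAspan i) j
      simpa [Matrix.mul_apply, Matrix.mulVec, dotProduct, hw] using this
    set a : Fin m → ℝ := P.mulVec v with ha
    set b : Fin m → ℝ := (P - Q).mulVec w with hb
    have hb' : b = (P - 1).mulVec w := by
      rw [hb, Matrix.sub_mulVec, Matrix.sub_mulVec, Matrix.one_mulVec, hQw]
    -- column decomposition: (Ahr - A)_{·j} = a + b
    have hdecomp : (fun i => Ahr i j - A i j) = fun i => a i + b i := by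
      funext i
      have hAhr' : Ahr i j = P.mulVec (fun k => Ah k j) i := by
        rw [hAhr]
        simp [Matrix.mul_apply, Matrix.mulVec, dotProduct]
      have hQw' : Q.mulVec w i = w i := congrFun hQw i
      have hveq : v = (fun k => Ah k j) - w := by
        funext k; simp [hv, hw]
      have hPv : a = P.mulVec (fun k => Ah k j) - P.mulVec w := by
        rw [ha, hveq, Matrix.mulVec_sub]
      rw [congrFun hPv i, hb]
      simp only [Matrix.sub_mulVec, Pi.sub_apply]
      rw [hAhr', hQw']
      simp only [hw]
      ring
    -- orthogonality of the two pieces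
    have horth : ∑ i, a i * b i = 0 := by
      rw [ha, hb']
      exact proj_orth P hPsym hPP v w
    -- bound on ∑ b², via the operator norm
    have hbsq : ∑ i, b i ^ 2 ≤ δ ^ 2 * m := by
      have h1 : norm2 b ≤ δ * Real.sqrt m := by
        calc norm2 b ≤ opNorm (P - Q) * norm2 w := by rw [hb]; exact norm2_mulVec_le _ _
          _ ≤ δ * Real.sqrt m :=
              mul_le_mul hproj (hcol j) (norm2_nonneg' w) hδ0
      have h2 : norm2 b ^ 2 ≤ (δ * Real.sqrt m) ^ 2 :=
        pow_le_pow_left₀ (norm2_nonneg' b) h1 2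
      rw [norm2_sq'] at h2
      calc ∑ i, b i ^ 2 ≤ (δ * Real.sqrt m) ^ 2 := h2
        _ = δ ^ 2 * m := by rw [mul_pow, Real.sq_sqrt (Nat.cast_nonneg m)]
    -- bound on ∑ a², via contraction of the projection and the max bound
    have hasq : ∑ i, a i ^ 2 ≤ m * Δ ^ 2 := by
      have hvsplit : ∀ i, v i = a i + (-((P - 1).mulVec v)) i := by
        intro i
        rw [ha]
        simp [Matrix.sub_mulVec, Matrix.one_mulVec]
      have horth2 : ∑ i, a i * (-((P - 1).mulVec v)) i = 0 := by
        have := proj_orth P hPsym hPP v v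
        rw [ha]
        simp only [Pi.neg_apply, mul_neg]
        rw [Finset.sum_neg_distrib, this, neg_zero]
      have hpyth : ∑ i, v i ^ 2
          = ∑ i, a i ^ 2 + ∑ i, (-((P - 1).mulVec v)) i ^ 2 := by
        rw [Finset.sum_congr rfl fun i _ => by rw [hvsplit i]]
        exact pythagoras' _ _ horth2
      have hcontr : ∑ i, a i ^ 2 ≤ ∑ i, v i ^ 2 := by
        rw [hpyth]
        have : 0 ≤ ∑ i, (-((P - 1).mulVec v)) i ^ 2 :=
          Finset.sum_nonneg fun i _ => sq_nonneg _
        linarith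
      have hvsq : ∑ i, v i ^ 2 ≤ m * Δ ^ 2 := by
        calc ∑ i, v i ^ 2 ≤ ∑ _i : Fin m, Δ ^ 2 := by
              refine Finset.sum_le_sum fun i _ => ?_
              have := hmax i j
              calc v i ^ 2 = |v i| ^ 2 := (sq_abs _).symm
                _ ≤ Δ ^ 2 := pow_le_pow_left₀ (abs_nonneg _) this 2
          _ = m * Δ ^ 2 := by simp [Finset.sum_const, nsmul_eq_mul]
      linarith
    rw [norm2_sq']
    have hdi : ∀ i, Ahr i j - A i j = a i + b i := fun i => congrFun hdecomp i
    calc ∑ i, (Ahr i j - A i j) ^ 2 = ∑ i, (a i + b i) ^ 2 :=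
          Finset.sum_congr rfl fun i _ => by rw [hdi i]
      _ = ∑ i, a i ^ 2 + ∑ i, b i ^ 2 := pythagoras' a b horth
      _ ≤ m * Δ ^ 2 + δ ^ 2 * m := add_le_add hasq hbsq
  refine ⟨main, fun j => ?_⟩
  have h1 : norm2 (fun i => Ahr i j - A i j) ^ 2 ≤ (Real.sqrt m * (Δ + δ)) ^ 2 := by
    calc norm2 (fun i => Ahr i j - A i j) ^ 2 ≤ m * Δ ^ 2 + δ ^ 2 * m := main j
      _ ≤ (Real.sqrt m * (Δ + δ)) ^ 2 := by
          rw [mul_pow, Real.sq_sqrt (Nat.cast_nonneg m)]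
          nlinarith [mul_nonneg hΔ0 hδ0, Nat.cast_nonneg (α := ℝ) m]
  have h2 : 0 ≤ Real.sqrt m * (Δ + δ) := by positivity
  nlinarith [norm2_nonneg' (fun i => Ahr i j - A i j)]
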